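/- arXiv:2307.07311 — 3 statements merged into one kernel-verified Lean document; each statement's English description precedes it below -/
import Mathlib

section
/- Let Λ ≥ max(‖τ‖_∞, ‖κ‖_∞) with κ continuous and nonvanishing on [0,l], and let E(θ) = ∫_0^l (κ² cos²θ + (θ'+τ)²)² / (κ² cos²θ) dt. Then for every θ ∈ W^{1,4}([0,l]) with E(θ) finite, Λ² · E(θ) ≥ (1/16)·‖θ'‖_{L^4}^4 − 2Λ⁴ l. -/
/-!
Since `κ² cos² θ ≤ Λ²`, the energy integrand `(a + b²)² / a` with `a = κ² cos² θ`,
`b = θ' + τ` is at least `b⁴ / Λ²`. On the other hand `|θ'| ≤ |θ' + τ| + Λ`, and convexity of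
`x ↦ x⁴` gives `|θ'|⁴ ≤ 8 (|θ' + τ|⁴ + Λ⁴)`. Integrating over `[0, l]` yields
`‖θ'‖⁴_{L⁴} ≤ 8 (Λ² E(θ) + Λ⁴ l)`, which is stronger than the claim.
-/

open MeasureTheory Set Real
open scoped ENNReal

/-- The bending energy `E(θ) = ∫_0^l (κ²cos²θ + (θ'+τ)²)² / (κ²cos²θ) dt`,
with values in `[0,∞]` (the integrand is `+∞` where the denominator vanishes
and the numerator is positive). -/
noncomputable def bendingEnergy (l : ℝ) (κ τ θ θ' : ℝ → ℝ) : ℝ≥0∞ :=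
  ∫⁻ t in Icc (0:ℝ) l,
    ENNReal.ofReal ((κ t ^ 2 * cos (θ t) ^ 2 + (θ' t + τ t) ^ 2) ^ 2) /
      ENNReal.ofReal (κ t ^ 2 * cos (θ t) ^ 2)

section LpBounds

variable {α E : Type*} [MeasurableSpace α] [SeminormedAddCommGroup E] {μ : Measure α}

theorem eLpNorm_natCast_pow_eq_lintegral (f : α → E) {n : ℕ} (hn : n ≠ 0) :
    eLpNorm f n μ ^ n = ∫⁻ x, ‖f x‖ₑ ^ n ∂μ := by
  simpa only [NNReal.coe_natCast, ENNReal.rpow_natCast, ENNReal.coe_natCast] using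
    eLpNorm_nnreal_pow_eq_lintegral (f := f) (μ := μ) (p := n) (by simpa using hn)

theorem enorm_pow_le_two_pow_mul_add (x y : E) (n : ℕ) :
    ‖x‖ₑ ^ n ≤ 2 ^ (n - 1) * (‖x + y‖ₑ ^ n + ‖y‖ₑ ^ n) := by
  have htri : ‖x‖₊ ≤ ‖x + y‖₊ + ‖y‖₊ := by simpa using nnnorm_sub_le (x + y) y
  have := (pow_le_pow_left₀ zero_le htri n).trans (add_pow_le zero_le zero_le n)
  simp only [enorm_eq_nnnorm]
  exact_mod_cast this

theorem lintegral_enorm_pow_le_of_ae_enorm_le (f g : α → E) (n : ℕ) {c : ℝ≥0∞}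
    (hg : ∀ᵐ x ∂μ, ‖g x‖ₑ ≤ c) :
    ∫⁻ x, ‖f x‖ₑ ^ n ∂μ ≤ 2 ^ (n - 1) * (∫⁻ x, ‖f x + g x‖ₑ ^ n ∂μ + c ^ n * μ univ) := by
  calc ∫⁻ x, ‖f x‖ₑ ^ n ∂μ ≤ ∫⁻ x, 2 ^ (n - 1) * (‖f x + g x‖ₑ ^ n + c ^ n) ∂μ := by
        refine lintegral_mono_ae (hg.mono fun x hx => ?_)
        grw [enorm_pow_le_two_pow_mul_add (f x) (g x) n, hx]
    _ = 2 ^ (n - 1) * (∫⁻ x, ‖f x + g x‖ₑ ^ n ∂μ + c ^ n * μ univ) := by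
        rw [lintegral_const_mul' _ _ (by simp), lintegral_add_right _ measurable_const,
          lintegral_const]

end LpBounds

theorem enorm_pow_four_le_mul_div {a b c : ℝ} (ha : 0 ≤ a) (hac : a ≤ c) (hc : 0 < c) :
    ‖b‖ₑ ^ 4 ≤ ENNReal.ofReal c * (ENNReal.ofReal ((a + b ^ 2) ^ 2) / ENNReal.ofReal a) := by
  have hb : ‖b‖ₑ ^ 4 = ENNReal.ofReal (b ^ 2) ^ 2 := by
    rw [Real.enorm_eq_ofReal_abs, ← ENNReal.ofReal_pow (abs_nonneg b),
      ← ENNReal.ofReal_pow (sq_nonneg b), ← sq_abs b]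
    ring_nf
  rw [ENNReal.ofReal_pow (by positivity), ENNReal.ofReal_add ha (sq_nonneg b), hb]
  calc ENNReal.ofReal (b ^ 2) ^ 2
      = ENNReal.ofReal c * (ENNReal.ofReal (b ^ 2) ^ 2 / ENNReal.ofReal c) :=
        (ENNReal.mul_div_cancel (by simpa using hc) ENNReal.ofReal_ne_top).symm
    _ ≤ ENNReal.ofReal c *
          ((ENNReal.ofReal a + ENNReal.ofReal (b ^ 2)) ^ 2 / ENNReal.ofReal a) := by
        gcongr ENNReal.ofReal c * ?_
        exact ENNReal.div_le_div (pow_le_pow_left₀ zero_le le_add_self 2)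
          (ENNReal.ofReal_le_ofReal hac)

theorem lintegral_enorm_add_pow_four_le_mul_bendingEnergy {l Λ : ℝ} {κ τ θ θ' : ℝ → ℝ}
    (hΛ : 0 < Λ) (hΛκ : ∀ t ∈ Icc (0:ℝ) l, |κ t| ≤ Λ) :
    ∫⁻ t in Icc (0:ℝ) l, ‖θ' t + τ t‖ₑ ^ 4 ≤
      ENNReal.ofReal (Λ ^ 2) * bendingEnergy l κ τ θ θ' := by
  rw [bendingEnergy, ← lintegral_const_mul' _ _ ENNReal.ofReal_ne_top]
  refine setLIntegral_mono_ae' measurableSet_Icc (.of_forall fun t ht => ?_)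
  refine enorm_pow_four_le_mul_div (by positivity) ?_ (by positivity)
  exact (mul_le_of_le_one_right (sq_nonneg _) (cos_sq_le_one _)).trans
    (sq_le_sq' (abs_le.mp (hΛκ t ht)).1 (abs_le.mp (hΛκ t ht)).2)

theorem coercivity_estimate_general (l : ℝ) (hl : 0 < l) (κ τ θ θ' : ℝ → ℝ)
    (hκ0 : ∀ t ∈ Icc (0:ℝ) l, κ t ≠ 0)
    (Λ : ℝ) (hΛτ : ∀ t ∈ Icc (0:ℝ) l, |τ t| ≤ Λ) (hΛκ : ∀ t ∈ Icc (0:ℝ) l, |κ t| ≤ Λ)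
    (hfin : bendingEnergy l κ τ θ θ' ≠ ∞) :
    (1/16) * (eLpNorm θ' 4 (volume.restrict (Icc (0:ℝ) l))).toReal ^ 4 - 2 * Λ ^ 4 * l ≤
      Λ ^ 2 * (bendingEnergy l κ τ θ θ').toReal := by
  set μ := volume.restrict (Icc (0:ℝ) l)
  set E := bendingEnergy l κ τ θ θ'
  have h0 : (0:ℝ) ∈ Icc 0 l := ⟨le_rfl, hl.le⟩
  have hΛ : 0 < Λ := (abs_pos.mpr (hκ0 0 h0)).trans_le (hΛκ 0 h0)
  have hτ : ∀ᵐ t ∂μ, ‖τ t‖ₑ ≤ ENNReal.ofReal Λ :=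
    (ae_restrict_mem measurableSet_Icc).mono fun t ht => by
      simpa [Real.enorm_eq_ofReal_abs] using ENNReal.ofReal_le_ofReal (hΛτ t ht)
  have hnorm : eLpNorm θ' 4 μ ^ 4 = ∫⁻ t, ‖θ' t‖ₑ ^ 4 ∂μ :=
    eLpNorm_natCast_pow_eq_lintegral θ' (by norm_num)
  have hvol : μ univ = ENNReal.ofReal l := by simp [μ]
  have hL4 : eLpNorm θ' 4 μ ^ 4 ≤ ENNReal.ofReal (8 * (Λ ^ 2 * E.toReal + Λ ^ 4 * l)) := by
    rw [hnorm, ENNReal.ofReal_mul (by norm_num),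
      ENNReal.ofReal_add (by positivity) (by positivity), ENNReal.ofReal_mul (by positivity),
      ENNReal.ofReal_toReal hfin, ENNReal.ofReal_mul (by positivity), ENNReal.ofReal_pow hΛ.le 4,
      ← hvol]
    grw [lintegral_enorm_pow_le_of_ae_enorm_le θ' τ 4 hτ,
      lintegral_enorm_add_pow_four_le_mul_bendingEnergy (θ := θ) hΛ hΛκ]
    norm_num [E]
  have hN := ENNReal.toReal_le_of_le_ofReal (by positivity) hL4
  rw [ENNReal.toReal_pow] at hN
  linarith [mul_pos (pow_pos hΛ 4) hl, mul_nonneg (sq_nonneg Λ) E.toReal_nonneg]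

/-- Coercivity estimate: `Λ² E(θ) ≥ (1/16)‖θ'‖_{L⁴}⁴ − 2Λ⁴ l`. -/
theorem coercivity_estimate (l : ℝ) (hl : 0 < l) (κ τ θ θ' : ℝ → ℝ)
    (hκ : ContinuousOn κ (Icc 0 l)) (hκ0 : ∀ t ∈ Icc (0:ℝ) l, κ t ≠ 0)
    (hτ : ContinuousOn τ (Icc 0 l))
    (Λ : ℝ) (hΛτ : ∀ t ∈ Icc (0:ℝ) l, |τ t| ≤ Λ) (hΛκ : ∀ t ∈ Icc (0:ℝ) l, |κ t| ≤ Λ)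
    (hrep : ∀ x ∈ Icc (0:ℝ) l, θ x = θ 0 + ∫ t in (0:ℝ)..x, θ' t)
    (hLp : MemLp θ' 4 (volume.restrict (Icc (0:ℝ) l)))
    (hfin : bendingEnergy l κ τ θ θ' ≠ ∞) :
    (1/16) * (eLpNorm θ' 4 (volume.restrict (Icc (0:ℝ) l))).toReal ^ 4 - 2 * Λ ^ 4 * l ≤
      Λ ^ 2 * (bendingEnergy l κ τ θ θ').toReal :=
  coercivity_estimate_general l hl κ τ θ θ' hκ0 Λ hΛτ hΛκ hfin
end

section
/- Suppose τ is a constant function on [0,l] with |τ| > nπ/l + max_{t∈[0,l]} |κ(t)| for some n ∈ ℕ, and let θ ∈ W^{1,4}([0,l]) satisfy E(θ) ≤ K²l, where K = max |κ| and E(θ) = ∫_0^l (κ² cos²θ + (θ'+τ)²)²/(κ² cos²θ) dt. Then |θ(0) − θ(l)| > nπ. -/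
/-
Pointwise, `(a + b)² / a ≥ 4b` (AM–GM), so `E(θ) ≥ 4 ∫ (θ' + τ)²`. By Cauchy–Schwarz,
`(θ(l) − θ(0) + τl)² = (∫ (θ' + τ))² ≤ l ∫ (θ' + τ)² ≤ l E(θ) / 4 ≤ (Kl)² / 4`, hence
`|θ(0) − θ(l)| ≥ l|τ| − Kl/2 > nπ + Kl/2 ≥ nπ`.
-/

open MeasureTheory Set Real
open scoped ENNReal

namespace MeasureTheory

variable {α : Type*} [MeasurableSpace α] {μ : Measure α}

theorem sq_integral_le_measureReal_univ_mul_integral_sq [IsFiniteMeasure μ] {f : α → ℝ}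
    (hf : MemLp f 2 μ) : (∫ a, f a ∂μ) ^ 2 ≤ μ.real univ * ∫ a, f a ^ 2 ∂μ := by
  set V := μ.real univ
  set I := ∫ a, f a ∂μ
  have hf1 : Integrable f μ := hf.integrable one_le_two
  have hf2 : Integrable (fun a => f a ^ 2) μ := hf.integrable_sq
  have hexpand : ∫ a, (V * f a - I) ^ 2 ∂μ = V * (V * ∫ a, f a ^ 2 ∂μ - I ^ 2) := by
    have hpoly : (fun a => (V * f a - I) ^ 2) =
        fun a => V ^ 2 * f a ^ 2 - 2 * V * I * f a + I ^ 2 := by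
      ext a; ring
    rw [hpoly, integral_add, integral_sub, integral_const_mul, integral_const_mul, integral_const,
      smul_eq_mul]
    · ring
    · exact hf2.const_mul _
    · exact hf1.const_mul _
    · exact (hf2.const_mul _).sub (hf1.const_mul _)
    · exact integrable_const _
  have hnonneg : 0 ≤ V * (V * ∫ a, f a ^ 2 ∂μ - I ^ 2) :=
    hexpand ▸ integral_nonneg fun a => sq_nonneg _
  rcases (measureReal_nonneg : 0 ≤ V).eq_or_lt with hV | hV
  · have hμ : μ = 0 := Measure.measure_univ_eq_zero.mp ((measureReal_eq_zero_iff).1 hV.symm)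
    simp [I, hμ]
  · nlinarith [(mul_nonneg_iff_of_pos_left hV).mp hnonneg]

end MeasureTheory

theorem ENNReal.ofReal_four_mul_le_sq_add_div {a b : ℝ} (ha : 0 ≤ a) (hb : 0 ≤ b) :
    ENNReal.ofReal (4 * b) ≤ ENNReal.ofReal ((a + b) ^ 2) / ENNReal.ofReal a := by
  rcases ha.eq_or_lt with rfl | ha
  · rcases hb.eq_or_lt with rfl | hb
    · simp
    · rw [ENNReal.ofReal_zero, ENNReal.div_zero (ENNReal.ofReal_pos.2 (by positivity)).ne']
      exact le_top
  · rw [← ENNReal.ofReal_div_of_pos ha]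
    exact ENNReal.ofReal_le_ofReal (by rw [le_div_iff₀ ha]; nlinarith [sq_nonneg (a - b)])

theorem ofReal_four_mul_integral_sq_le_bendingEnergy {l : ℝ} {κ τ θ θ' : ℝ → ℝ}
    (h : Integrable (fun t => (θ' t + τ t) ^ 2) (volume.restrict (Icc 0 l))) :
    ENNReal.ofReal (4 * ∫ t in Icc 0 l, (θ' t + τ t) ^ 2) ≤ bendingEnergy l κ τ θ θ' := by
  rw [← integral_const_mul, ofReal_integral_eq_lintegral_ofReal (h.const_mul 4)
    (Filter.Eventually.of_forall fun t => by positivity)]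
  exact lintegral_mono fun t => ENNReal.ofReal_four_mul_le_sq_add_div (by positivity) (sq_nonneg _)

theorem sq_endpoint_increment_le {l τ M : ℝ} {κ θ θ' : ℝ → ℝ} (hl : 0 ≤ l) (hM : 0 ≤ M)
    (hrep : θ l = θ 0 + ∫ t in (0:ℝ)..l, θ' t) (hθ' : MemLp θ' 2 (volume.restrict (Icc 0 l)))
    (hE : bendingEnergy l κ (fun _ => τ) θ θ' ≤ ENNReal.ofReal M) :
    4 * (θ l - θ 0 + τ * l) ^ 2 ≤ l * M := by
  have hf : MemLp (fun t => θ' t + τ) 2 (volume.restrict (Icc 0 l)) := hθ'.add (memLp_const τ)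
  have hvol : (volume.restrict (Icc (0:ℝ) l)).real univ = l := by simp [hl]
  have hincrement : ∫ t in Icc 0 l, (θ' t + τ) = θ l - θ 0 + τ * l := by
    rw [integral_add (hθ'.integrable one_le_two) (integrable_const _), integral_const, hvol,
      smul_eq_mul, hrep, intervalIntegral.integral_of_le hl, integral_Icc_eq_integral_Ioc]
    ring
  have henergy : 4 * ∫ t in Icc 0 l, (θ' t + τ) ^ 2 ≤ M :=
    (ENNReal.ofReal_le_ofReal_iff hM).1
      ((ofReal_four_mul_integral_sq_le_bendingEnergy hf.integrable_sq).trans hE)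
  have hCS := sq_integral_le_measureReal_univ_mul_integral_sq hf
  rw [hvol, hincrement] at hCS
  nlinarith

theorem endpoint_gap_general (l : ℝ) (hl : 0 < l) (κ θ θ' : ℝ → ℝ) (τ : ℝ) (n : ℕ)
    (K : ℝ) (hK : K = sSup ((fun t => |κ t|) '' Icc (0:ℝ) l))
    (hτ : |τ| > n * π / l + K)
    (hrep : ∀ x ∈ Icc (0:ℝ) l, θ x = θ 0 + ∫ t in (0:ℝ)..x, θ' t)
    (hLp : MemLp θ' 4 (volume.restrict (Icc (0:ℝ) l)))
    (hE : bendingEnergy l κ (fun _ => τ) θ θ' ≤ ENNReal.ofReal (K ^ 2 * l)) :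
    |θ 0 - θ l| > n * π := by
  have hK0 : 0 ≤ K := hK ▸ Real.sSup_nonneg (by rintro _ ⟨t, -, rfl⟩; exact abs_nonneg _)
  have hinc := sq_endpoint_increment_le hl.le (by positivity) (hrep l ⟨hl.le, le_rfl⟩)
    (hLp.mono_exponent (by norm_num)) hE
  have hinc_abs : 2 * |θ l - θ 0 + τ * l| ≤ K * l := by
    rw [← abs_two, ← abs_mul]
    exact abs_le_of_sq_le_sq (by nlinarith) (by positivity)
  have hτl : n * π + K * l < |τ| * l := by
    have := mul_lt_mul_of_pos_right hτ hl
    rwa [add_mul, div_mul_cancel₀ _ hl.ne'] at this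
  have htriangle : |τ * l| ≤ |θ 0 - θ l| + |θ l - θ 0 + τ * l| := by
    calc |τ * l| = |(θ 0 - θ l) + (θ l - θ 0 + τ * l)| := by congr 1; ring
      _ ≤ _ := abs_add_le _ _
  rw [abs_mul, abs_of_pos hl] at htriangle
  linarith [mul_nonneg hK0 hl.le]

/-- For constant torsion `τ` with `|τ| > nπ/l + max|κ|` and any `θ` with
`E(θ) ≤ K²l` (where `K = max|κ|`), one has `|θ(0) − θ(l)| > nπ`. -/
theorem endpoint_gap (l : ℝ) (hl : 0 < l) (κ θ θ' : ℝ → ℝ) (τ : ℝ) (n : ℕ)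
    (hκ : ContinuousOn κ (Icc 0 l)) (hκ0 : ∀ t ∈ Icc (0:ℝ) l, κ t ≠ 0)
    (K : ℝ) (hK : K = sSup ((fun t => |κ t|) '' Icc (0:ℝ) l))
    (hτ : |τ| > n * π / l + K)
    (hrep : ∀ x ∈ Icc (0:ℝ) l, θ x = θ 0 + ∫ t in (0:ℝ)..x, θ' t)
    (hLp : MemLp θ' 4 (volume.restrict (Icc (0:ℝ) l)))
    (hE : bendingEnergy l κ (fun _ => τ) θ θ' ≤ ENNReal.ofReal (K ^ 2 * l)) :
    |θ 0 - θ l| > n * π :=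
  endpoint_gap_general l hl κ θ θ' τ n K hK hτ hrep hLp hE
end

section
/- Suppose the constant torsion satisfies |τ| > nπ/l + max|κ|. Then any minimizer θ_min of E over W^{1,4}([0,l]) has at least n singular points, i.e., at least n points t with θ_min(t) ∈ π/2 + πℤ. -/
/-!
Comparing with the competitor `θ₀ t = -τ t`, for which `θ₀' + τ = 0`, gives `E θmin ≤ K² l` with
`K = max |κ|`. The integrand of `E` dominates `(θ' + τ)⁴ / K²`, so `‖θmin' + τ‖₄ ≤ K l^{1/4}` and,
by Hölder, `∫ |θmin' + τ| ≤ K l`. Hence `|θmin l - θmin 0| ≥ (|τ| - K) l > n π`, and by the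
intermediate value theorem `θmin` crosses `n` distinct levels of `π / 2 + π ℤ`.
-/

open MeasureTheory Set Real
open scoped ENNReal

theorem lintegral_enorm_le_of_lintegral_enorm_rpow_le {α E : Type*} [MeasurableSpace α]
    {μ : Measure α} [NormedAddCommGroup E] {g : α → E} (hg : AEStronglyMeasurable g μ) {p : ℝ}
    (hp : 1 ≤ p) {C : ℝ≥0∞} (h : ∫⁻ x, ‖g x‖ₑ ^ p ∂μ ≤ C ^ p * μ univ) :
    ∫⁻ x, ‖g x‖ₑ ∂μ ≤ C * μ univ := by
  have hp0 : 0 < p := one_pos.trans_le hp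
  have hHolder := eLpNorm'_le_eLpNorm'_mul_rpow_measure_univ one_pos hp hg
  simp only [eLpNorm'_eq_lintegral_enorm, ENNReal.rpow_one, div_one] at hHolder
  refine hHolder.trans ?_
  calc (∫⁻ x, ‖g x‖ₑ ^ p ∂μ) ^ (1 / p) * μ univ ^ (1 - 1 / p)
      ≤ (C ^ p * μ univ) ^ (1 / p) * μ univ ^ (1 - 1 / p) := by gcongr
    _ = C * μ univ := by
      rw [ENNReal.mul_rpow_of_nonneg _ _ (by positivity), one_div, ENNReal.rpow_rpow_inv hp0.ne',
        mul_assoc, ← ENNReal.rpow_add_of_nonneg _ _ (by positivity)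
          (sub_nonneg.2 (inv_le_one_of_one_le₀ hp)),
        add_sub_cancel, ENNReal.rpow_one]

lemma sq_mul_cos_sq_le_sq {k K : ℝ} (hk : |k| ≤ K) (c : ℝ) : k ^ 2 * cos c ^ 2 ≤ K ^ 2 :=
  calc k ^ 2 * cos c ^ 2 ≤ k ^ 2 := mul_le_of_le_one_right (sq_nonneg k) (cos_sq_le_one c)
    _ = |k| ^ 2 := (sq_abs k).symm
    _ ≤ K ^ 2 := pow_le_pow_left₀ (abs_nonneg k) hk 2

lemma enorm_pow_four_eq_ofReal (x : ℝ) : ‖x‖ₑ ^ 4 = ENNReal.ofReal ((x ^ 2) ^ 2) := by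
  rw [Real.enorm_eq_ofReal_abs, ← ENNReal.ofReal_pow (abs_nonneg x), ← sq_abs x]
  ring_nf

section BendingEnergy

variable {l K : ℝ} {κ τ θ θ' : ℝ → ℝ}

theorem bendingEnergy_le_of_add_eq_zero (hκK : ∀ t ∈ Icc 0 l, |κ t| ≤ K)
    (hθ' : ∀ t ∈ Icc 0 l, θ' t + τ t = 0) :
    bendingEnergy l κ τ θ θ' ≤ ENNReal.ofReal (K ^ 2) * volume (Icc 0 l) := by
  rw [bendingEnergy, ← setLIntegral_const]
  refine setLIntegral_mono' measurableSet_Icc fun t ht => ?_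
  have ha : 0 ≤ κ t ^ 2 * cos (θ t) ^ 2 := by positivity
  rw [hθ' t ht, zero_pow two_ne_zero, add_zero, ENNReal.ofReal_pow ha, pow_two, mul_div_assoc]
  exact ENNReal.mul_div_le.trans (ENNReal.ofReal_le_ofReal (sq_mul_cos_sq_le_sq (hκK t ht) _))

theorem lintegral_enorm_pow_four_le_mul_bendingEnergy (hK : 0 < K)
    (hκK : ∀ t ∈ Icc 0 l, |κ t| ≤ K) :
    ∫⁻ t in Icc 0 l, ‖θ' t + τ t‖ₑ ^ 4 ≤ ENNReal.ofReal (K ^ 2) * bendingEnergy l κ τ θ θ' := by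
  have hK2 : ENNReal.ofReal (K ^ 2) ≠ 0 := by simpa using hK.ne'
  rw [bendingEnergy, ← lintegral_const_mul' _ _ ENNReal.ofReal_ne_top]
  refine setLIntegral_mono' measurableSet_Icc fun t ht => ?_
  calc ‖θ' t + τ t‖ₑ ^ 4
      = ENNReal.ofReal (((θ' t + τ t) ^ 2) ^ 2) / ENNReal.ofReal (K ^ 2) *
          ENNReal.ofReal (K ^ 2) := by
        rw [ENNReal.div_mul_cancel hK2 ENNReal.ofReal_ne_top, enorm_pow_four_eq_ofReal]
    _ ≤ _ := by
      rw [mul_comm]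
      gcongr
      · exact le_add_of_nonneg_left (by positivity)
      · exact sq_mul_cos_sq_le_sq (hκK t ht) _

theorem lintegral_enorm_add_le_of_bendingEnergy_le (hK : 0 < K) (hκK : ∀ t ∈ Icc 0 l, |κ t| ≤ K)
    (hg : AEStronglyMeasurable (fun t => θ' t + τ t) (volume.restrict (Icc 0 l)))
    (hE : bendingEnergy l κ τ θ θ' ≤ ENNReal.ofReal (K ^ 2) * volume (Icc 0 l)) :
    ∫⁻ t in Icc 0 l, ‖θ' t + τ t‖ₑ ≤ ENNReal.ofReal K * volume (Icc 0 l) := by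
  have hL4 : ∫⁻ t in Icc 0 l, ‖θ' t + τ t‖ₑ ^ (4:ℝ) ≤
      ENNReal.ofReal K ^ (4:ℝ) * volume.restrict (Icc 0 l) univ := by
    simp only [ENNReal.rpow_ofNat, Measure.restrict_apply_univ]
    calc ∫⁻ t in Icc 0 l, ‖θ' t + τ t‖ₑ ^ 4
        ≤ ENNReal.ofReal (K ^ 2) * bendingEnergy l κ τ θ θ' :=
          lintegral_enorm_pow_four_le_mul_bendingEnergy hK hκK
      _ ≤ ENNReal.ofReal (K ^ 2) * (ENNReal.ofReal (K ^ 2) * volume (Icc 0 l)) := by gcongr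
      _ = ENNReal.ofReal K ^ 4 * volume (Icc 0 l) := by
        rw [ENNReal.ofReal_pow hK.le, ← mul_assoc, ← pow_add]
  simpa only [Measure.restrict_apply_univ] using
    lintegral_enorm_le_of_lintegral_enorm_rpow_le hg (by norm_num) hL4

end BendingEnergy

theorem abs_mul_sub_le_abs_intervalIntegral {g : ℝ → ℝ} {l τ M : ℝ} (hl : 0 ≤ l) (hM : 0 ≤ M)
    (hg : IntegrableOn g (Icc 0 l)) (h : ∫⁻ t in Icc 0 l, ‖g t + τ‖ₑ ≤ ENNReal.ofReal M) :
    |τ| * l - M ≤ |∫ t in 0..l, g t| := by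
  have hsplit : ∫ t in Icc 0 l, (g t + τ) = (∫ t in 0..l, g t) + τ * l := by
    rw [integral_add hg (integrableOn_const measure_Icc_lt_top.ne),
      intervalIntegral.integral_of_le hl, integral_Icc_eq_integral_Ioc, setIntegral_const, Real.volume_real_Icc_of_le hl, sub_zero,
      smul_eq_mul, mul_comm]
  have hbound : |(∫ t in 0..l, g t) + τ * l| ≤ M := by
    rw [← hsplit, ← ENNReal.ofReal_le_ofReal_iff hM, ← Real.enorm_eq_ofReal_abs]
    exact (enorm_integral_le_lintegral_enorm _).trans h
  have htri := abs_sub ((∫ t in 0..l, g t) + τ * l) (∫ t in 0..l, g t)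
  rw [add_sub_cancel_left, abs_mul, abs_of_nonneg hl] at htri
  linarith

theorem continuousOn_of_eq_add_intervalIntegral {θ θ' : ℝ → ℝ} {a b : ℝ} (hab : a ≤ b)
    (hθ' : IntegrableOn θ' (Icc a b)) (hθ : ∀ x ∈ Icc a b, θ x = θ a + ∫ t in a..x, θ' t) :
    ContinuousOn θ (Icc a b) := by
  rw [← uIcc_of_le hab] at hθ' ⊢
  exact (continuousOn_const.add (intervalIntegral.continuousOn_primitive_interval hθ')).congr
    (by rwa [uIcc_of_le hab])

theorem ContinuousOn.exists_injective_eq_add_int_mul {θ : ℝ → ℝ} {a b : ℝ} (hab : a ≤ b)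
    (hθ : ContinuousOn θ (Icc a b)) {c p : ℝ} (hp : 0 < p) {n : ℕ}
    (hgap : n * p < |θ b - θ a|) :
    ∃ f : Fin n → ℝ, Function.Injective f ∧
      ∀ i, f i ∈ Icc a b ∧ ∃ k : ℤ, θ (f i) = c + k * p := by
  obtain ⟨k₀, ⟨hk₀_ge, hk₀_lt⟩, -⟩ := existsUnique_add_zsmul_mem_Ico hp c (min (θ a) (θ b))
  rw [zsmul_eq_mul] at hk₀_ge hk₀_lt
  set v : Fin n → ℝ := fun i => c + ((k₀ + i : ℤ) : ℝ) * p
  have hv_mono : StrictMono v := fun i j hij => by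
    simp only [v, Int.cast_add, Int.cast_natCast]
    gcongr
    exact_mod_cast hij
  have hv_mem : ∀ i, v i ∈ uIcc (θ a) (θ b) := fun i => by
    have hi : (i : ℝ) + 1 ≤ n := by exact_mod_cast i.isLt
    have hmax : max (θ a) (θ b) - min (θ a) (θ b) = |θ b - θ a| := by
      rw [max_sub_min_eq_abs', abs_sub_comm]
    simp only [v, Int.cast_add, Int.cast_natCast, uIcc, mem_Icc]
    constructor <;> nlinarith [Nat.cast_nonneg (α := ℝ) i]
  have hIVT := intermediate_value_uIcc (by rwa [uIcc_of_le hab] : ContinuousOn θ (uIcc a b))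
  choose f hf hθf using fun i => hIVT (hv_mem i)
  refine ⟨f, Function.Injective.of_comp (f := θ) ?_, fun i => ⟨?_, _, hθf i⟩⟩
  · rw [show θ ∘ f = v from funext hθf]
    exact hv_mono.injective
  · simpa only [uIcc_of_le hab] using hf i

/-- Theorem 1.3: if the constant torsion satisfies `|τ| > nπ/l + max|κ|`, then
any minimizer of `E` over `W^{1,4}([0,l])` has at least `n` singular points,
i.e., `n` distinct points `t` with `θ(t) ∈ π/2 + πℤ`. -/
theorem minimizer_singular_points (l : ℝ) (hl : 0 < l) (κ : ℝ → ℝ) (τ : ℝ) (n : ℕ)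
    (hκ : ContinuousOn κ (Icc 0 l)) (hκ0 : ∀ t ∈ Icc (0:ℝ) l, κ t ≠ 0)
    (hτ : |τ| > n * π / l + sSup ((fun t => |κ t|) '' Icc (0:ℝ) l))
    (θmin θmin' : ℝ → ℝ)
    (hrep : ∀ x ∈ Icc (0:ℝ) l, θmin x = θmin 0 + ∫ t in (0:ℝ)..x, θmin' t)
    (hLp : MemLp θmin' 4 (volume.restrict (Icc (0:ℝ) l)))
    (hmin : ∀ θ θ' : ℝ → ℝ,
      (∀ x ∈ Icc (0:ℝ) l, θ x = θ 0 + ∫ t in (0:ℝ)..x, θ' t) →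
      MemLp θ' 4 (volume.restrict (Icc (0:ℝ) l)) →
      bendingEnergy l κ (fun _ => τ) θmin θmin' ≤ bendingEnergy l κ (fun _ => τ) θ θ') :
    ∃ f : Fin n → ℝ, Function.Injective f ∧
      ∀ i, f i ∈ Icc (0:ℝ) l ∧ ∃ k : ℤ, θmin (f i) = π / 2 + k * π := by
  set K := sSup ((fun t => |κ t|) '' Icc (0:ℝ) l)
  have h0 : (0:ℝ) ∈ Icc 0 l := ⟨le_rfl, hl.le⟩
  have hκK : ∀ t ∈ Icc 0 l, |κ t| ≤ K := fun t ht =>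
    le_csSup (isCompact_Icc.bddAbove_image hκ.abs) (mem_image_of_mem _ ht)
  have hK : 0 < K := (abs_pos.2 (hκ0 0 h0)).trans_le (hκK 0 h0)
  have hθ'int : IntegrableOn θmin' (Icc 0 l) := hLp.integrable (by norm_num)
  have hlinear : ∀ x ∈ Icc (0:ℝ) l, -(τ * x) = -(τ * 0) + ∫ _ in (0:ℝ)..x, -τ := by
    intro x _
    simp only [intervalIntegral.integral_const, smul_eq_mul]
    ring
  have hE : bendingEnergy l κ (fun _ => τ) θmin θmin' ≤ ENNReal.ofReal (K ^ 2) * volume (Icc 0 l) :=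
    (hmin _ _ hlinear (memLp_const _)).trans
      (bendingEnergy_le_of_add_eq_zero hκK fun _ _ => neg_add_cancel τ)
  have hL1 : ∫⁻ t in Icc 0 l, ‖θmin' t + τ‖ₑ ≤ ENNReal.ofReal (K * l) := by
    have h := lintegral_enorm_add_le_of_bendingEnergy_le hK hκK
      (hLp.add (memLp_const τ)).aestronglyMeasurable hE
    rwa [Real.volume_Icc, sub_zero, ← ENNReal.ofReal_mul hK.le] at h
  have hgap : n * π < |θmin l - θmin 0| := by
    have hτl := abs_mul_sub_le_abs_intervalIntegral hl.le (by positivity) hθ'int hL1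
    rw [← sub_eq_of_eq_add' (hrep l ⟨hl.le, le_rfl⟩)] at hτl
    have := mul_lt_mul_of_pos_right hτ hl
    rw [add_mul, div_mul_cancel₀ _ hl.ne'] at this
    linarith
  exact (continuousOn_of_eq_add_intervalIntegral hl.le hθ'int hrep).exists_injective_eq_add_int_mul
    hl.le pi_pos hgap
end
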